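/- arXiv:1301.3942 — 3 statements merged into one kernel-verified Lean document; each statement's English description precedes it below -/
import Mathlib

section
/- If a lattice gauge field with values in a group G has trivial plaquette holonomy (f(p) = 1 for every plaquette p), then the Wilson loop around any closed loop that bounds a connected sub-lattice 𝔻 (i.e., is homologically trivial) is the identity element. -/
/-!  Lattice gauge theory set-up on the 2-d square lattice; see the paper.

A path is a list of steps `(μ, b)`: from the current vertex `x`, if `b = true`
move to `x + e μ` picking up the link variable `U μ x`; if `b = false` move to
`x - e μ` picking up `(U μ (x - e μ))⁻¹`. -/

/-- Endpoint of a path starting at `x`. -/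
def pathEnd {Vt : Type*} [AddGroup Vt] (e : Fin 2 → Vt) (x : Vt) :
    List (Fin 2 × Bool) → Vt
  | [] => x
  | (μ, b) :: γ => pathEnd e (if b then x + e μ else x - e μ) γ

/-- The Wilson line of the gauge field `U` along a path starting at `x`. -/
def wline {G Vt : Type*} [Group G] [AddGroup Vt] (e : Fin 2 → Vt)
    (U : Fin 2 → Vt → G) (x : Vt) : List (Fin 2 × Bool) → G
  | [] => 1
  | (μ, b) :: γ =>
      if b then wline e U (x + e μ) γ * U μ x
      else wline e U (x - e μ) γ * (U μ (x - e μ))⁻¹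

/-- The plaquette holonomy (field strength) based at the vertex `x`. -/
def plaq {G Vt : Type*} [Group G] [AddGroup Vt] (e : Fin 2 → Vt)
    (U : Fin 2 → Vt → G) (x : Vt) : G :=
  (U 1 x)⁻¹ * (U 0 (x + e 1))⁻¹ * U 1 (x + e 0) * U 0 x

/-!
A flat field on `ℤ²` is pure gauge: let `V` be the parallel transport from the origin along the
first axis and then up the second one. Vertical links are `V (y + e₁) * (V y)⁻¹` by construction,
and flatness of the plaquettes propagates the same identity for horizontal links from the axis to
every row. The Wilson line of a pure-gauge field telescopes to `V (end) * (V start)⁻¹`, which is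
trivial on a closed path.
-/

theorem Int.funext_of_recursion {α : Type*} {f g : ℤ → α} (φ : ℤ → α → α)
    (hφ : ∀ n, Function.Injective (φ n)) (hf : ∀ n, f (n + 1) = φ n (f n))
    (hg : ∀ n, g (n + 1) = φ n (g n)) (h0 : f 0 = g 0) : f = g := by
  funext n
  induction n using Int.induction_on with
  | zero => exact h0
  | succ k ih => rw [hf, hg, ih]
  | pred k ih =>
    apply hφ (-k - 1)
    rwa [← hf, ← hg, sub_add_cancel]

section

variable {G : Type*} [Group G]

theorem Int.exists_map_zero_eq_one_and_succ_eq_mul (a : ℤ → G) :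
    ∃ f : ℤ → G, f 0 = 1 ∧ ∀ n, f (n + 1) = a n * f n := by
  refine ⟨fun n ↦ n.inductionOn' 0 1 (fun k _ x ↦ a k * x) (fun k _ x ↦ (a (k - 1))⁻¹ * x),
    Int.inductionOn'_self, fun n ↦ ?_⟩
  rcases le_or_gt 0 n with hn | hn
  · exact Int.inductionOn'_add_one hn
  · have h := Int.inductionOn'_sub_one (motive := fun _ ↦ G) (zero := 1)
      (succ := fun k _ x ↦ a k * x) (pred := fun k _ x ↦ (a (k - 1))⁻¹ * x)
      (show n + 1 ≤ 0 by omega)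
    simp only [add_sub_cancel_right] at h
    simp only [h, mul_inv_cancel_left]

def IsPureGauge {Vt : Type*} [AddGroup Vt] (e : Fin 2 → Vt) (U : Fin 2 → Vt → G)
    (V : Vt → G) : Prop :=
  ∀ μ y, U μ y = V (y + e μ) * (V y)⁻¹

theorem IsPureGauge.wline_eq {Vt : Type*} [AddGroup Vt] {e : Fin 2 → Vt}
    {U : Fin 2 → Vt → G} {V : Vt → G} (hV : IsPureGauge e U V) (x : Vt)
    (γ : List (Fin 2 × Bool)) : wline e U x γ = V (pathEnd e x γ) * (V x)⁻¹ := by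
  induction γ generalizing x with
  | nil => simp [wline, pathEnd]
  | cons s γ ih =>
    obtain ⟨μ, _ | _⟩ := s
    · simp only [wline, pathEnd, Bool.false_eq_true, if_false, ih, hV μ (x - e μ),
        sub_add_cancel, mul_inv_rev, inv_inv, mul_assoc, inv_mul_cancel_left]
    · simp only [wline, pathEnd, if_true, ih, hV μ x, mul_assoc, inv_mul_cancel_left]

theorem plaq_eq_one_iff {U : Fin 2 → ℤ × ℤ → G} (m n : ℤ) :
    plaq ![(1, 0), (0, 1)] U (m, n) = 1 ↔
      U 0 (m, n + 1) = U 1 (m + 1, n) * U 0 (m, n) * (U 1 (m, n))⁻¹ := by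
  simp only [plaq, Matrix.cons_val_zero, Matrix.cons_val_one, Prod.mk_add_mk, add_zero]
  rw [mul_assoc, mul_eq_one_comm, ← mul_assoc, mul_inv_eq_one, eq_comm]

theorem exists_isPureGauge_of_plaq_eq_one {U : Fin 2 → ℤ × ℤ → G}
    (hflat : ∀ p, plaq ![(1, 0), (0, 1)] U p = 1) :
    ∃ V, IsPureGauge ![(1, 0), (0, 1)] U V := by
  obtain ⟨h, -, hh⟩ := Int.exists_map_zero_eq_one_and_succ_eq_mul fun k ↦ U 0 (k, 0)
  choose g hg0 hg using fun m ↦ Int.exists_map_zero_eq_one_and_succ_eq_mul fun k ↦ U 1 (m, k)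
  -- Each plaquette conjugates the horizontal link by the two vertical links beside it.
  have horizontal_link (m : ℤ) :
      (fun n ↦ g (m + 1) n * U 0 (m, 0) * (g m n)⁻¹) = fun n ↦ U 0 (m, n) :=
    Int.funext_of_recursion (fun n x ↦ U 1 (m + 1, n) * x * (U 1 (m, n))⁻¹)
      (fun n ↦ (mul_left_injective _).comp (mul_right_injective _))
      (fun n ↦ by simp only [hg, mul_inv_rev, mul_assoc])
      (fun n ↦ (plaq_eq_one_iff m n).1 (hflat _)) (by simp [hg0])
  refine ⟨fun p ↦ g p.1 p.2 * h p.1, ?_⟩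
  rintro μ ⟨m, n⟩
  fin_cases μ
  · simp [hh, ← congrFun (horizontal_link m) n, mul_assoc]
  · simp [hg, mul_assoc]

end

/-- If a lattice gauge field on the 2-d square lattice `ℤ²` has
trivial plaquette holonomy everywhere, then the Wilson loop around any
(homologically trivial) closed loop is the identity. -/
theorem wilson_loop_trivial_of_flat {G : Type*} [Group G]
    (e : Fin 2 → ℤ × ℤ) (he : e = ![(1, 0), (0, 1)])
    (U : Fin 2 → ℤ × ℤ → G)
    (hflat : ∀ p : ℤ × ℤ, plaq e U p = 1)
    (x : ℤ × ℤ) (γ : List (Fin 2 × Bool)) (hclosed : pathEnd e x γ = x) :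
    wline e U x γ = 1 := by
  subst he
  obtain ⟨V, hV⟩ := exists_isPureGauge_of_plaq_eq_one hflat
  rw [hV.wline_eq, hclosed, mul_inv_cancel]
end

section
/- On an N×N periodic square lattice, if the gauge field has trivial plaquette holonomy in every plaquette, then two Wilson lines that start at the same base point and cross the lattice once in the same homology class (along possibly different paths) are equal as group elements. -/
/-- Signed winding number of a path in the direction `μ`. -/
def wind (μ : Fin 2) (γ : List (Fin 2 × Bool)) : ℤ :=
  (γ.count (μ, true) : ℤ) - (γ.count (μ, false) : ℤ)

/-!
Lift everything to the universal cover `ℤ × ℤ` of the torus. There the flat gauge field is pure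
gauge, `U μ z = g (z + e μ) * (g z)⁻¹`, so every Wilson line telescopes to
`g (end) * (g start)⁻¹`; and on `ℤ × ℤ` the endpoint of a path is its start shifted by its winding
numbers. Paths with the same winding numbers thus have the same lifted endpoint, hence equal
Wilson lines.
-/

section IntProd

variable {G : Type*} [Group G]

/-- The ordered product `f (n - 1) * ⋯ * f 1 * f 0` for `n ≥ 0`, continued to `n < 0` so that
`intProd_add_one` holds on all of `ℤ`. -/
def intProd (f : ℤ → G) : ℤ → G
  | .ofNat 0 => 1
  | .ofNat (n + 1) => f n * intProd f (.ofNat n)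
  | .negSucc 0 => (f (-1))⁻¹
  | .negSucc (n + 1) => (f (.negSucc (n + 1)))⁻¹ * intProd f (.negSucc n)
termination_by n => n.natAbs

theorem intProd_zero (f : ℤ → G) : intProd f 0 = 1 := intProd.eq_1 f

theorem intProd_add_one (f : ℤ → G) (n : ℤ) : intProd f (n + 1) = f n * intProd f n := by
  rcases n with (n | _ | n)
  · exact intProd.eq_2 f n
  · change intProd f 0 = f (-1) * intProd f (.negSucc 0)
    rw [intProd_zero, intProd.eq_3, mul_inv_cancel]
  · change intProd f (.negSucc n) = f (.negSucc (n + 1)) * intProd f (.negSucc (n + 1))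
    rw [intProd.eq_4, mul_inv_cancel_left]

theorem eq_intProd_mul_of_add_one {f A : ℤ → G} (hA : ∀ n, A (n + 1) = f n * A n) (n : ℤ) :
    A n = intProd f n * A 0 := by
  induction n using Int.induction_on with
  | zero => rw [intProd_zero, one_mul]
  | succ n ih => rw [hA, intProd_add_one, ih, mul_assoc]
  | pred n ih =>
    rw [← mul_left_cancel_iff (a := f (-(n : ℤ) - 1)), ← hA, ← mul_assoc, ← intProd_add_one,
      sub_add_cancel, ih]

end IntProd

section Lattice

variable {G V W : Type*} [Group G]

theorem plaq_eq_one_iff_s9 [AddGroup V] (e : Fin 2 → V) (U : Fin 2 → V → G) (x : V) :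
    plaq e U x = 1 ↔ U 1 (x + e 0) * U 0 x = U 0 (x + e 1) * U 1 x := by
  rw [plaq, mul_assoc, mul_assoc, inv_mul_eq_one, eq_inv_mul_iff_mul_eq, eq_comm]

theorem plaq_comp [AddGroup V] [AddGroup W] (e : Fin 2 → V) (π : W →+ V) (f : Fin 2 → W)
    (hπ : ∀ μ, π (f μ) = e μ) (U : Fin 2 → V → G) (z : W) :
    plaq f (fun μ ↦ U μ ∘ π) z = plaq e U (π z) := by
  simp only [plaq, Function.comp_apply, map_add, hπ]

theorem wline_comp [AddGroup V] [AddGroup W] (e : Fin 2 → V) (π : W →+ V) (f : Fin 2 → W)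
    (hπ : ∀ μ, π (f μ) = e μ) (U : Fin 2 → V → G) (z : W) (γ : List (Fin 2 × Bool)) :
    wline f (fun μ ↦ U μ ∘ π) z γ = wline e U (π z) γ := by
  induction γ generalizing z with
  | nil => rfl
  | cons s γ ih => obtain ⟨μ, _ | _⟩ := s <;> simp [wline, ih, hπ]

theorem wline_eq_of_forall_add_eq_mul [AddGroup V] (e : Fin 2 → V) (U : Fin 2 → V → G)
    (g : V → G) (hg : ∀ μ z, g (z + e μ) = U μ z * g z) (x : V) (γ : List (Fin 2 × Bool)) :
    wline e U x γ = g (pathEnd e x γ) * (g x)⁻¹ := by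
  induction γ generalizing x with
  | nil => simp [wline, pathEnd]
  | cons s γ ih =>
    obtain ⟨μ, _ | _⟩ := s
    · have hback : g x = U μ (x - e μ) * g (x - e μ) := by rw [← hg, sub_add_cancel]
      simp only [wline, pathEnd, Bool.false_eq_true, if_false, ih, hback]
      group
    · simp only [wline, pathEnd, if_true, ih, hg]
      group

theorem wind_cons (ν μ : Fin 2) (b : Bool) (γ : List (Fin 2 × Bool)) :
    wind ν ((μ, b) :: γ) = wind ν γ + if ν = μ then (if b then 1 else -1) else 0 := by
  by_cases h : ν = μ <;> cases b <;> simp [wind, h, eq_comm] <;> ring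

theorem pathEnd_eq_add_sum_wind [AddCommGroup V] (e : Fin 2 → V) (x : V)
    (γ : List (Fin 2 × Bool)) : pathEnd e x γ = x + ∑ μ, wind μ γ • e μ := by
  induction γ generalizing x with
  | nil => simp [pathEnd, wind]
  | cons s γ ih =>
    obtain ⟨μ, b⟩ := s
    simp only [pathEnd, ih, wind_cons, add_smul, Finset.sum_add_distrib, ite_smul, zero_smul,
      Finset.sum_ite_eq', Finset.mem_univ, if_true]
    cases b <;> simp only [Bool.false_eq_true, if_false, if_true, neg_smul, one_smul] <;> abel

/-- The potential `g (m, n)` is the transport from the origin along the row to `(m, 0)` and then up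
the column to `(m, n)`; flatness makes it compatible with the horizontal links off that row. -/
theorem exists_potential_of_plaq_eq_one (U : Fin 2 → ℤ × ℤ → G)
    (hU : ∀ z, plaq ![(1, 0), (0, 1)] U z = 1) :
    ∃ g : ℤ × ℤ → G, ∀ μ z, g (z + ![(1, 0), (0, 1)] μ) = U μ z * g z := by
  have hflat (m n : ℤ) : U 1 (m + 1, n) * U 0 (m, n) = U 0 (m, n + 1) * U 1 (m, n) := by
    simpa using (plaq_eq_one_iff_s9 _ U (m, n)).1 (hU (m, n))
  have hcol (m n : ℤ) : U 0 (m, n) * intProd (fun k ↦ U 1 (m, k)) n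
      = intProd (fun k ↦ U 1 (m + 1, k)) n * U 0 (m, 0) := by
    have hstep (k : ℤ) : U 0 (m, k + 1) * intProd (fun k ↦ U 1 (m, k)) (k + 1)
        = U 1 (m + 1, k) * (U 0 (m, k) * intProd (fun k ↦ U 1 (m, k)) k) := by
      rw [intProd_add_one, ← mul_assoc, ← hflat, mul_assoc]
    rw [eq_intProd_mul_of_add_one (A := fun k ↦ U 0 (m, k) * intProd (fun k ↦ U 1 (m, k)) k)
      hstep n, intProd_zero, mul_one]
  refine ⟨fun z ↦ intProd (fun k ↦ U 1 (z.1, k)) z.2 * intProd (fun k ↦ U 0 (k, 0)) z.1, ?_⟩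
  rintro μ ⟨m, n⟩
  fin_cases μ
  · simp only [Fin.zero_eta, Matrix.cons_val_zero, Prod.mk_add_mk, add_zero]
    rw [intProd_add_one, ← mul_assoc, ← mul_assoc, hcol]
  · simp only [Fin.mk_one, Matrix.cons_val_one, Matrix.cons_val_fin_one, Prod.mk_add_mk,
      add_zero]
    rw [intProd_add_one, mul_assoc]

end Lattice

theorem wilson_lines_equal_of_same_homology_general {G : Type*} [Group G] {N : ℕ}
    (e : Fin 2 → ZMod N × ZMod N) (he : e = ![(1, 0), (0, 1)])
    (U : Fin 2 → ZMod N × ZMod N → G)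
    (hflat : ∀ p : ZMod N × ZMod N, plaq e U p = 1)
    (x : ZMod N × ZMod N) (γ₁ γ₂ : List (Fin 2 × Bool))
    (hwind : ∀ μ : Fin 2, wind μ γ₁ = wind μ γ₂) :
    wline e U x γ₁ = wline e U x γ₂ := by
  subst he
  let π : ℤ × ℤ →+ ZMod N × ZMod N := (Int.castAddHom _).prodMap (Int.castAddHom _)
  have hπ (μ : Fin 2) : π (![(1, 0), (0, 1)] μ) = ![(1, 0), (0, 1)] μ := by
    fin_cases μ <;> simp [π]
  obtain ⟨g, hg⟩ := exists_potential_of_plaq_eq_one (fun μ ↦ U μ ∘ π) fun z ↦ by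
    rw [plaq_comp _ π _ hπ, hflat]
  obtain ⟨x, rfl⟩ : ∃ z, π z = x := ZMod.intCast_surjective.prodMap ZMod.intCast_surjective x
  simp only [← wline_comp _ π _ hπ, wline_eq_of_forall_add_eq_mul _ _ g hg,
    pathEnd_eq_add_sum_wind, hwind]

/-- On the N×N periodic lattice, if the gauge field has trivial
plaquette holonomy everywhere, then two Wilson lines starting at the same base
point, with the same endpoint and the same homology class (the same signed
winding numbers around the torus), are equal as group elements. -/
theorem wilson_lines_equal_of_same_homology {G : Type*} [Group G] {N : ℕ}
    (e : Fin 2 → ZMod N × ZMod N) (he : e = ![(1, 0), (0, 1)])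
    (U : Fin 2 → ZMod N × ZMod N → G)
    (hflat : ∀ p : ZMod N × ZMod N, plaq e U p = 1)
    (x : ZMod N × ZMod N) (γ₁ γ₂ : List (Fin 2 × Bool))
    (hend : pathEnd e x γ₁ = pathEnd e x γ₂)
    (hwind : ∀ μ : Fin 2, wind μ γ₁ = wind μ γ₂) :
    wline e U x γ₁ = wline e U x γ₂ :=
  wilson_lines_equal_of_same_homology_general e he U hflat x γ₁ γ₂ hwind
end

section
/- The space of zero-field-strength gauge configurations on an N×N periodic lattice is parameterized by 𝕌₀[G] ≅ S(G) × G^{N²-1}, where S(G) = {(g₁, g₂) ∈ G × G : g₁g₂ = g₂g₁}. Concretely: the map sending a function ω : vertices of the N×N torus lattice lifted to ℤ² (with ω(0,0) = 1, satisfying the periodicity constraints ω(N,i)ω(N,0)⁻¹ = ω(0,i), ω(i,N)ω(0,N)⁻¹ = ω(i,0) for 1 ≤ i ≤ N-1, and ω(N,N) = ω(N,0)ω(0,N) = ω(0,N)ω(N,0)) to the pure-gauge field U_μ(x) = ω(x+μ̂)ω(x)⁻¹ gives a bijection between such functions and zero-field-strength gauge configurations on the periodic lattice; the free data are the commuting pair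 (ω(N,0), ω(0,N)) ∈ S(G) and the N²-1 unconstrained values ω(x,y) for (x,y) ≠ (0,0) in the fundamental domain. -/
/-- The vertex `(a.val : Fin (N+1))` of the fundamental domain `[0,N]²` of the
`ℤ²`-lift of the discrete torus, corresponding to `a : ZMod N`. -/
def vtx {N : ℕ} [NeZero N] (a : ZMod N) : Fin (N + 1) :=
  ⟨a.val, Nat.lt_succ_of_lt (ZMod.val_lt a)⟩

/-- The shifted vertex `a.val + 1 : Fin (N+1)` (one step in the positive
direction, inside the fundamental domain, without wrapping around). -/
def vtxS {N : ℕ} [NeZero N] (a : ZMod N) : Fin (N + 1) :=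
  ⟨a.val + 1, Nat.succ_lt_succ (ZMod.val_lt a)⟩

/-- The pure-gauge field `U_μ(x) = ω(x + μ̂) ω(x)⁻¹` on the N×N periodic lattice
determined by a function `ω` on the fundamental domain `[0,N]²`. -/
def gaugeOfOmega {G : Type*} [Group G] {N : ℕ} [NeZero N]
    (ω : Fin (N + 1) × Fin (N + 1) → G) : Fin 2 → ZMod N × ZMod N → G :=
  fun μ x =>
    if μ = 0 then ω (vtxS x.1, vtx x.2) * (ω (vtx x.1, vtx x.2))⁻¹
    else ω (vtx x.1, vtxS x.2) * (ω (vtx x.1, vtx x.2))⁻¹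

/-- The set of functions `ω` on the fundamental domain `[0,N]²` normalized by
`ω(0,0) = 1` and satisfying the periodicity constraints
`ω(N,i) ω(N,0)⁻¹ = ω(0,i)`, `ω(i,N) ω(0,N)⁻¹ = ω(i,0)` for `1 ≤ i ≤ N-1`, and
`ω(N,N) = ω(N,0) ω(0,N) = ω(0,N) ω(N,0)`. -/
def omegaSet (G : Type*) [Group G] (N : ℕ) :
    Set ((Fin (N + 1) × Fin (N + 1)) → G) :=
  {ω | ω (0, 0) = 1 ∧
    (∀ i : Fin (N + 1), 1 ≤ (i : ℕ) → (i : ℕ) ≤ N - 1 →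
      ω (Fin.last N, i) * (ω (Fin.last N, 0))⁻¹ = ω (0, i) ∧
      ω (i, Fin.last N) * (ω (0, Fin.last N))⁻¹ = ω (i, 0)) ∧
    ω (Fin.last N, Fin.last N) = ω (Fin.last N, 0) * ω (0, Fin.last N) ∧
    ω (Fin.last N, 0) * ω (0, Fin.last N) = ω (0, Fin.last N) * ω (Fin.last N, 0)}

/-- The free data carried by such an `ω`: the commuting pair
`(ω(N,0), ω(0,N)) ∈ S(G)` and the `N² - 1` unconstrained values `ω(x,y)` for
`(x,y) ≠ (0,0)` in the fundamental domain. -/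
def omegaData {G : Type*} [Group G] {N : ℕ} [NeZero N]
    (ω : (Fin (N + 1) × Fin (N + 1)) → G) :
    (G × G) × (({v : Fin N × Fin N // v ≠ (0, 0)}) → G) :=
  ((ω (Fin.last N, 0), ω (0, Fin.last N)),
    fun v => ω (Fin.castSucc v.1.1, Fin.castSucc v.1.2))

/-! A flat configuration is pure gauge: the Wilson line from the origin to `(i, j)`, taken along
the bottom row and then up column `i`, is a potential `ω` for it. Flatness lets the column lines
of neighbouring columns be intertwined by the bottom links, and going once around the torus this
yields the periodicity constraints, with `ω(N,0)` and `ω(0,N)` the two commuting holonomies.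
Conversely, read on the fundamental domain, a link of `U_μ(x) = ω(x+μ̂) ω(x)⁻¹` crossing the
boundary picks up the factor `ω(N,0)` or `ω(0,N)`; these commute, so every plaquette still
telescopes to `1`. Finally the periodicity constraints express all boundary values of `ω` through
its interior values and that commuting pair, which are otherwise free. -/

section

variable {G : Type*} [Group G] {N : ℕ}

theorem Fin.eq_zero_or_eq_last_or_interior (i : Fin (N + 1)) :
    i = 0 ∨ i = Fin.last N ∨ 1 ≤ (i : ℕ) ∧ (i : ℕ) ≤ N - 1 := by
  rw [Fin.ext_iff, Fin.ext_iff, Fin.val_zero, Fin.val_last]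
  omega

theorem omegaSet.apply_last_fst {ω : Fin (N + 1) × Fin (N + 1) → G} (hω : ω ∈ omegaSet G N)
    (j : Fin (N + 1)) : ω (Fin.last N, j) = ω (0, j) * ω (Fin.last N, 0) := by
  obtain ⟨h00, hper, hlast, hcomm⟩ := hω
  rcases Fin.eq_zero_or_eq_last_or_interior j with rfl | rfl | ⟨h1, h2⟩
  · rw [h00, one_mul]
  · exact hlast.trans hcomm
  · exact mul_inv_eq_iff_eq_mul.mp (hper j h1 h2).1

theorem omegaSet.apply_last_snd {ω : Fin (N + 1) × Fin (N + 1) → G} (hω : ω ∈ omegaSet G N)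
    (i : Fin (N + 1)) : ω (i, Fin.last N) = ω (i, 0) * ω (0, Fin.last N) := by
  obtain ⟨h00, hper, hlast, -⟩ := hω
  rcases Fin.eq_zero_or_eq_last_or_interior i with rfl | rfl | ⟨h1, h2⟩
  · rw [h00, one_mul]
  · exact hlast
  · exact mul_inv_eq_iff_eq_mul.mp (hper i h1 h2).2

def IsFlat (U : Fin 2 → ZMod N × ZMod N → G) : Prop :=
  ∀ a b : ZMod N, U 1 (a + 1, b) * U 0 (a, b) = U 0 (a, b + 1) * U 1 (a, b)

theorem isFlat_iff_forall_plaq_eq_one (U : Fin 2 → ZMod N × ZMod N → G) :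
    IsFlat U ↔ ∀ x, plaq ![(1, 0), (0, 1)] U x = 1 := by
  simp only [IsFlat, Prod.forall, plaq, Matrix.cons_val_zero, Matrix.cons_val_one, Prod.mk_add_mk,
    add_zero, mul_assoc, inv_mul_eq_one, eq_inv_mul_iff_mul_eq, eq_comm (a := U 0 _ * _)]

def rowLine (U : Fin 2 → ZMod N × ZMod N → G) : ℕ → G
  | 0 => 1
  | i + 1 => U 0 (i, 0) * rowLine U i

def colLine (U : Fin 2 → ZMod N × ZMod N → G) (a : ZMod N) : ℕ → G
  | 0 => 1
  | j + 1 => U 1 (a, j) * colLine U a j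

def omegaOfGauge (U : Fin 2 → ZMod N × ZMod N → G) (p : Fin (N + 1) × Fin (N + 1)) : G :=
  colLine U ((p.1 : ℕ) : ZMod N) p.2 * rowLine U p.1

namespace IsFlat

variable {U : Fin 2 → ZMod N × ZMod N → G}

theorem colLine_add_one_mul (hU : IsFlat U) (a : ZMod N) (j : ℕ) :
    colLine U (a + 1) j * U 0 (a, 0) = U 0 (a, j) * colLine U a j := by
  induction j with
  | zero => simp [colLine]
  | succ j ih => rw [colLine, colLine, mul_assoc, ih, ← mul_assoc, hU, Nat.cast_succ, mul_assoc]

theorem colLine_mul_rowLine (hU : IsFlat U) (i : ℕ) :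
    colLine U i N * rowLine U i = rowLine U i * colLine U 0 N := by
  induction i with
  | zero => simp [rowLine]
  | succ i ih =>
    rw [rowLine, Nat.cast_succ, ← mul_assoc, hU.colLine_add_one_mul, ZMod.natCast_self,
      mul_assoc, ih, mul_assoc]

theorem omegaOfGauge_mem (hU : IsFlat U) : omegaOfGauge U ∈ omegaSet G N := by
  have hNN := hU.colLine_mul_rowLine N
  rw [ZMod.natCast_self] at hNN
  refine ⟨by simp [omegaOfGauge, colLine, rowLine], fun i _ _ => ⟨?_, ?_⟩, ?_, ?_⟩
  · simp [omegaOfGauge, colLine, rowLine]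
  · simp [omegaOfGauge, colLine, rowLine, hU.colLine_mul_rowLine]
  · simpa [omegaOfGauge, colLine, rowLine, ZMod.natCast_self] using hNN
  · simpa [omegaOfGauge, colLine, rowLine, ZMod.natCast_self] using hNN.symm

end IsFlat

def boundaryFactor (g : G) (a : ZMod N) : G :=
  if a.val + 1 = N then g else 1

theorem commute_boundaryFactor {g h : G} (hgh : Commute g h) (a b : ZMod N) :
    Commute (boundaryFactor g a) (boundaryFactor h b) := by
  unfold boundaryFactor
  split_ifs <;> simp [hgh]

end

section

variable {G : Type*} [Group G] {N : ℕ} [NeZero N]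

@[simp]
theorem Fin.lastCases_zero {α : Sort*} (l : α) (c : Fin N → α) :
    Fin.lastCases (motive := fun _ => α) l c (0 : Fin (N + 1)) = c 0 :=
  Fin.lastCases_castSucc 0

def extendByOne (f : {v : Fin N × Fin N // v ≠ (0, 0)} → G) (v : Fin N × Fin N) : G :=
  if h : v = (0, 0) then 1 else f ⟨v, h⟩

@[simp]
theorem extendByOne_zero (f : {v : Fin N × Fin N // v ≠ (0, 0)} → G) :
    extendByOne f (0, 0) = 1 :=
  dif_pos rfl

theorem extendByOne_of_ne (f : {v : Fin N × Fin N // v ≠ (0, 0)} → G) {v : Fin N × Fin N}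
    (hv : v ≠ (0, 0)) : extendByOne f v = f ⟨v, hv⟩ :=
  dif_neg hv

def omegaOfData (q : (G × G) × ({v : Fin N × Fin N // v ≠ (0, 0)} → G))
    (p : Fin (N + 1) × Fin (N + 1)) : G :=
  Fin.lastCases
    (Fin.lastCases (q.1.1 * q.1.2) (fun b => extendByOne q.2 (0, b) * q.1.1) p.2)
    (fun a => Fin.lastCases (extendByOne q.2 (a, 0) * q.1.2) (fun b => extendByOne q.2 (a, b)) p.2)
    p.1

theorem omegaOfData_mem (q : (G × G) × ({v : Fin N × Fin N // v ≠ (0, 0)} → G))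
    (hq : q.1.1 * q.1.2 = q.1.2 * q.1.1) : omegaOfData q ∈ omegaSet G N := by
  refine ⟨by simp [omegaOfData], fun i h1 h2 => ?_, by simp [omegaOfData], by simpa [omegaOfData]⟩
  obtain ⟨b, rfl⟩ : ∃ b : Fin N, i = Fin.castSucc b := ⟨⟨i, by omega⟩, rfl⟩
  simp [omegaOfData]

theorem omegaData_omegaOfData (q : (G × G) × ({v : Fin N × Fin N // v ≠ (0, 0)} → G)) :
    omegaData (omegaOfData q) = q := by
  ext v
  · simp [omegaData, omegaOfData]
  · simp [omegaData, omegaOfData]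
  · simp [omegaData, omegaOfData, extendByOne_of_ne _ v.2]

theorem extendByOne_omegaData {ω : Fin (N + 1) × Fin (N + 1) → G} (h00 : ω (0, 0) = 1)
    (v : Fin N × Fin N) : extendByOne (omegaData ω).2 v = ω (v.1.castSucc, v.2.castSucc) := by
  by_cases hv : v = (0, 0)
  · simp [hv, h00]
  · simp [extendByOne_of_ne _ hv, omegaData]

theorem omegaOfData_omegaData {ω : Fin (N + 1) × Fin (N + 1) → G} (hω : ω ∈ omegaSet G N) :
    omegaOfData (omegaData ω) = ω := by
  funext ⟨i, j⟩
  rcases i.eq_castSucc_or_eq_last with ⟨a, rfl⟩ | rfl <;>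
    rcases j.eq_castSucc_or_eq_last with ⟨b, rfl⟩ | rfl <;>
    simp only [omegaOfData, Fin.lastCases_castSucc, Fin.lastCases_last,
      extendByOne_omegaData hω.1]
  · exact (omegaSet.apply_last_snd hω _).symm
  · exact (omegaSet.apply_last_fst hω _).symm
  · exact hω.2.2.1.symm

theorem vtx_natCast {i : ℕ} (hi : i < N) : vtx (i : ZMod N) = ⟨i, by omega⟩ :=
  Fin.ext (ZMod.val_natCast_of_lt hi)

theorem vtxS_natCast {i : ℕ} (hi : i < N) : vtxS (i : ZMod N) = ⟨i + 1, by omega⟩ :=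
  Fin.ext (congrArg (· + 1) (ZMod.val_natCast_of_lt hi))

@[simp]
theorem vtx_zero : vtx (0 : ZMod N) = 0 :=
  Fin.ext (ZMod.val_zero (n := N))

theorem vtxS_eq_vtx_add_one {a : ZMod N} (ha : a.val + 1 < N) : vtxS a = vtx (a + 1) := by
  rw [← ZMod.natCast_zmod_val a, ← Nat.cast_add_one, vtx_natCast ha, ZMod.natCast_zmod_val]
  rfl

theorem add_one_eq_zero_of_val_add_one_eq {a : ZMod N} (ha : a.val + 1 = N) : a + 1 = 0 := by
  rw [← ZMod.natCast_zmod_val a, ← Nat.cast_add_one, ha, ZMod.natCast_self]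

theorem IsFlat.gaugeOfOmega_omegaOfGauge {U : Fin 2 → ZMod N × ZMod N → G} (hU : IsFlat U) :
    gaugeOfOmega (omegaOfGauge U) = U := by
  funext μ ⟨a, b⟩
  fin_cases μ
  · simp [gaugeOfOmega, omegaOfGauge, vtx, vtxS, rowLine, ← mul_assoc, hU.colLine_add_one_mul]
  · simp [gaugeOfOmega, omegaOfGauge, vtx, vtxS, colLine]

variable {ω : Fin (N + 1) × Fin (N + 1) → G}

theorem omegaSet.apply_vtxS_fst (hω : ω ∈ omegaSet G N) (a : ZMod N) (j : Fin (N + 1)) :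
    ω (vtxS a, j) = ω (vtx (a + 1), j) * boundaryFactor (ω (Fin.last N, 0)) a := by
  unfold boundaryFactor
  split_ifs with ha
  · rw [add_one_eq_zero_of_val_add_one_eq ha, vtx_zero, ← omegaSet.apply_last_fst hω]
    exact congrArg (fun i => ω (i, j)) (Fin.ext ha)
  · rw [vtxS_eq_vtx_add_one (by have := ZMod.val_lt a; omega), mul_one]

theorem omegaSet.apply_vtxS_snd (hω : ω ∈ omegaSet G N) (b : ZMod N) (i : Fin (N + 1)) :
    ω (i, vtxS b) = ω (i, vtx (b + 1)) * boundaryFactor (ω (0, Fin.last N)) b := by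
  unfold boundaryFactor
  split_ifs with hb
  · rw [add_one_eq_zero_of_val_add_one_eq hb, vtx_zero, ← omegaSet.apply_last_snd hω]
    exact congrArg (fun j => ω (i, j)) (Fin.ext hb)
  · rw [vtxS_eq_vtx_add_one (by have := ZMod.val_lt b; omega), mul_one]

theorem isFlat_gaugeOfOmega (hω : ω ∈ omegaSet G N) : IsFlat (gaugeOfOmega ω) := by
  have h₀ (a b : ZMod N) : gaugeOfOmega ω 0 (a, b) =
      ω (vtx (a + 1), vtx b) * boundaryFactor (ω (Fin.last N, 0)) a * (ω (vtx a, vtx b))⁻¹ := by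
    simp [gaugeOfOmega, omegaSet.apply_vtxS_fst hω]
  have h₁ (a b : ZMod N) : gaugeOfOmega ω 1 (a, b) =
      ω (vtx a, vtx (b + 1)) * boundaryFactor (ω (0, Fin.last N)) b * (ω (vtx a, vtx b))⁻¹ := by
    simp [gaugeOfOmega, omegaSet.apply_vtxS_snd hω]
  intro a b
  have hcomm := (commute_boundaryFactor hω.2.2.2 a b).eq
  simp only [h₀, h₁, mul_assoc, inv_mul_cancel_left]
  rw [← mul_assoc (boundaryFactor _ b), ← hcomm, mul_assoc]

theorem rowLine_gaugeOfOmega {i : ℕ} (hi : i ≤ N) :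
    rowLine (gaugeOfOmega ω) i = ω (⟨i, by omega⟩, 0) * (ω (0, 0))⁻¹ := by
  induction i with
  | zero => simp [rowLine]
  | succ i ih =>
    rw [rowLine, ih (by omega)]
    simp [gaugeOfOmega, vtx_natCast (show i < N by omega), vtxS_natCast (show i < N by omega)]

theorem colLine_gaugeOfOmega (a : ZMod N) {j : ℕ} (hj : j ≤ N) :
    colLine (gaugeOfOmega ω) a j = ω (vtx a, ⟨j, by omega⟩) * (ω (vtx a, 0))⁻¹ := by
  induction j with
  | zero => simp [colLine]
  | succ j ih =>
    rw [colLine, ih (by omega)]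
    simp [gaugeOfOmega, vtx_natCast (show j < N by omega), vtxS_natCast (show j < N by omega)]

theorem omegaOfGauge_gaugeOfOmega (hω : ω ∈ omegaSet G N) :
    omegaOfGauge (gaugeOfOmega ω) = ω := by
  funext ⟨i, j⟩
  rw [omegaOfGauge, rowLine_gaugeOfOmega i.is_le, colLine_gaugeOfOmega _ j.is_le]
  rcases i.eq_castSucc_or_eq_last with ⟨a, rfl⟩ | rfl
  · simp [vtx_natCast a.is_lt, hω.1]
    rfl
  · simp only [Fin.val_last, ZMod.natCast_self, vtx_zero, hω.1, inv_one, mul_one]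
    exact (omegaSet.apply_last_fst hω j).symm

end

/-- The space of zero-field-strength gauge configurations on
the N×N periodic lattice is `𝕌₀[G] ≅ S(G) × G^{N²-1}`: the map `ω ↦ U` given by
`U_μ(x) = ω(x+μ̂) ω(x)⁻¹` is a bijection from the set of constrained functions
`ω` onto the zero-field-strength configurations, and the map extracting the
free data—the commuting pair `(ω(N,0), ω(0,N)) ∈ S(G)` together with the
`N² - 1` unconstrained values—is a bijection onto
`S(G) × G^{N²-1}`. -/
theorem flat_configurations_parameterization {G : Type*} [Group G] {N : ℕ} [NeZero N]
    (e : Fin 2 → ZMod N × ZMod N) (he : e = ![(1, 0), (0, 1)]) :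
    Set.BijOn (gaugeOfOmega (G := G) (N := N)) (omegaSet G N)
        {U : Fin 2 → ZMod N × ZMod N → G | ∀ x, plaq e U x = 1} ∧
      Set.BijOn (omegaData (G := G) (N := N)) (omegaSet G N)
        {q : (G × G) × (({v : Fin N × Fin N // v ≠ (0, 0)}) → G) |
          q.1.1 * q.1.2 = q.1.2 * q.1.1} := by
  subst he
  simp only [← isFlat_iff_forall_plaq_eq_one]
  exact ⟨Set.InvOn.bijOn
      ⟨fun _ => omegaOfGauge_gaugeOfOmega, fun _ => IsFlat.gaugeOfOmega_omegaOfGauge⟩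
      (fun _ => isFlat_gaugeOfOmega) (fun _ => IsFlat.omegaOfGauge_mem),
    Set.InvOn.bijOn ⟨fun _ => omegaOfData_omegaData, fun q _ => omegaData_omegaOfData q⟩
      (fun _ hω => hω.2.2.2) (fun q => omegaOfData_mem q)⟩
end
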